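/- Let P be a connected type-C poset of height one. If the relation graph RG(P) contains an even cycle, then g_C(P) is not contact. -/

import Mathlib

open scoped DirectSum

namespace LiePoset

/-- A type-C poset on the ground set `{-n, …, -1, 1, …, n} ⊆ ℤ`:
a partial order `le` supported on that set such that `i ≼ j` implies `i ≤ j` in `ℤ`,
and for `i ≠ -j`, `i ≼ j ↔ -j ≼ -i`. -/
structure TypeCPoset (n : ℕ) where
  le : ℤ → ℤ → Prop
  supp : ∀ ⦃i j : ℤ⦄, le i j → i ≠ 0 ∧ |i| ≤ (n : ℤ) ∧ j ≠ 0 ∧ |j| ≤ (n : ℤ)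
  refl : ∀ i : ℤ, i ≠ 0 → |i| ≤ (n : ℤ) → le i i
  antisymm : ∀ ⦃i j : ℤ⦄, le i j → le j i → i = j
  trans : ∀ ⦃i j k : ℤ⦄, le i j → le j k → le i k
  compat : ∀ ⦃i j : ℤ⦄, le i j → i ≤ j
  nsymm : ∀ ⦃i j : ℤ⦄, i ≠ -j → (le i j ↔ le (-j) (-i))

namespace TypeCPoset

variable {n : ℕ}

/-- The strict relation `i ≺ j` of a type-C poset. -/
def lt (P : TypeCPoset n) (i j : ℤ) : Prop := P.le i j ∧ i ≠ j

/-- `P` has height one: every chain of `P` has cardinality at most two. -/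
def HeightOne (P : TypeCPoset n) : Prop := ∀ i j k : ℤ, P.lt i j → P.lt j k → False

/-- `P` is separable: there is no relation `x ≺ y` with `x` negative and `y` positive. -/
def Separable (P : TypeCPoset n) : Prop := ∀ i j : ℤ, i < 0 → 0 < j → ¬ P.lt i j

/-- `P` has height `(1,1)`: `P⁺` has height exactly one and `P` has height exactly one. -/
def Height11 (P : TypeCPoset n) : Prop :=
  P.HeightOne ∧ ∃ i j : ℤ, 0 < i ∧ 0 < j ∧ P.lt i j

/-- `P` has height `(0,1)`: `P⁺` has height zero and `P` has height exactly one. -/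
def Height01 (P : TypeCPoset n) : Prop :=
  P.HeightOne ∧ (∀ i j : ℤ, 0 < i → 0 < j → ¬ P.lt i j) ∧ ∃ i j : ℤ, P.lt i j

end TypeCPoset

/-- The vertex set of the relation graph: the positive elements `{1, …, n}`. -/
abbrev Pos (n : ℕ) : Type := {i : ℤ // i ∈ Finset.Icc (1 : ℤ) (n : ℤ)}

/-- The matrix index set `{-n, …, -1, 1, …, n}`. -/
abbrev Idx (n : ℕ) : Type := {i : ℤ // i ∈ (Finset.Icc (-(n : ℤ)) (n : ℤ)).erase 0}

/-- Negation on the index set. -/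
def Idx.neg {n : ℕ} (a : Idx n) : Idx n :=
  ⟨-a.val, by
    have h := a.property
    simp only [Finset.mem_erase, Finset.mem_Icc] at h ⊢
    omega⟩

/-- A positive vertex as a matrix index. -/
def Pos.toIdx {n : ℕ} (i : Pos n) : Idx n :=
  ⟨i.val, by
    have h := i.property
    simp only [Finset.mem_erase, Finset.mem_Icc] at h ⊢
    omega⟩

/-- `2n × 2n` complex matrices, with rows and columns indexed by `{-n, …, -1, 1, …, n}`. -/
abbrev Mat (n : ℕ) : Type := Matrix (Idx n) (Idx n) ℂ

namespace TypeCPoset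

variable {n : ℕ}

/-- `D_i = E_{-i,-i} - E_{i,i}`. -/
def Dmat (i : Pos n) : Mat n :=
  Matrix.single i.toIdx.neg i.toIdx.neg 1 - Matrix.single i.toIdx i.toIdx 1

/-- `R^±_{i,j} = E_{-i,j} + E_{-j,i}`. -/
def Rpm (i j : Pos n) : Mat n :=
  Matrix.single i.toIdx.neg j.toIdx 1 + Matrix.single j.toIdx.neg i.toIdx 1

/-- `R_{i,j} = E_{-j,-i} - E_{i,j}`. -/
def Rdash (i j : Pos n) : Mat n :=
  Matrix.single j.toIdx.neg i.toIdx.neg 1 - Matrix.single i.toIdx j.toIdx 1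

/-- `E_{-i,i}`. -/
def Eloop (i : Pos n) : Mat n := Matrix.single i.toIdx.neg i.toIdx 1

/-- The standard spanning set of the type-C Lie poset algebra `g_C(P)`. -/
def gcSet (P : TypeCPoset n) : Set (Mat n) :=
  {M | (∃ i : Pos n, M = Dmat i)
      ∨ (∃ i j : Pos n, P.lt (-j.val) (-i.val) ∧ M = Rdash i j)
      ∨ (∃ i j : Pos n, P.lt (-i.val) j.val ∧ P.lt (-j.val) i.val ∧ M = Rpm i j)
      ∨ (∃ i : Pos n, P.lt (-i.val) i.val ∧ M = Eloop i)}

/-- The simple graph underlying the relation graph `RG(P)`: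
vertices `{1, …, n}`, with `i` adjacent to `j` (for `i ≠ j`) whenever there is a
(dashed or non-dashed) edge between them. -/
def RG (P : TypeCPoset n) : SimpleGraph (Pos n) where
  Adj i j := i ≠ j ∧ (P.lt (-i.val) j.val ∨ P.lt (-j.val) i.val ∨
      P.lt (-i.val) (-j.val) ∨ P.lt (-j.val) (-i.val))
  symm := by
    refine ⟨?_⟩
    intro i j h
    exact ⟨h.1.symm, by tauto⟩
  loopless := by
    refine ⟨?_⟩
    intro i h
    exact h.1 rfl

/-- `RG(P)` has a (non-dashed) self-loop at vertex `i`, i.e. `-i ≺ i`. -/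
def HasLoopAt (P : TypeCPoset n) (i : Pos n) : Prop := P.lt (-i.val) i.val

/-- There is a dashed edge `{i,j}` in `RG(P)`. -/
def DashedEdge (P : TypeCPoset n) (i j : Pos n) : Prop :=
  P.lt (-i.val) (-j.val) ∨ P.lt (-j.val) (-i.val)

/-- There is a non-dashed edge `{i,j}` in `RG(P)` (a self-loop when `i = j`). -/
def NonDashedEdge (P : TypeCPoset n) (i j : Pos n) : Prop :=
  P.lt (-i.val) j.val ∨ P.lt (-j.val) i.val

open scoped Classical in
/-- The set of non-dashed edges of `RG(P)` (including self-loops). -/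
noncomputable def edgesND (P : TypeCPoset n) : Finset (Sym2 (Pos n)) :=
  Finset.univ.filter fun e => ∃ i j : Pos n, e = Sym2.mk i j ∧ NonDashedEdge P i j

open scoped Classical in
/-- The set of dashed edges of `RG(P)`. -/
noncomputable def edgesD (P : TypeCPoset n) : Finset (Sym2 (Pos n)) :=
  Finset.univ.filter fun e => ∃ i j : Pos n, e = Sym2.mk i j ∧ i ≠ j ∧ DashedEdge P i j

/-- `|E(P)|`, the number of edges of `RG(P)`. -/
noncomputable def numEdges (P : TypeCPoset n) : ℕ := (P.edgesND).card + (P.edgesD).card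

/-- The cycles of `RG(P)`, recorded by their edge sets: a self-loop at `v`, or a cycle
of the underlying simple graph.  A cycle has an odd (resp. even) number of vertices
iff its edge set has odd (resp. even) cardinality. -/
def cycles (P : TypeCPoset n) : Set (Finset (Sym2 (Pos n))) :=
  {s | ∃ v : Pos n, P.HasLoopAt v ∧ s = {Sym2.mk v v}} ∪
  {s | ∃ (v : Pos n) (p : (RG P).Walk v v), p.IsCycle ∧ s = p.edges.toFinset}

/-- The cycles of `RG(P)` contained in the connected component `c`. -/
def cyclesIn (P : TypeCPoset n) (c : (RG P).ConnectedComponent) :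
    Set (Finset (Sym2 (Pos n))) :=
  {s | ∃ v : Pos n, (RG P).connectedComponentMk v = c ∧
    ((P.HasLoopAt v ∧ s = {Sym2.mk v v}) ∨
      ∃ p : (RG P).Walk v v, p.IsCycle ∧ s = p.edges.toFinset)}

/-- `η(P)`: the number of connected components of `RG(P)` containing no odd cycles. -/
noncomputable def eta (P : TypeCPoset n) : ℕ :=
  Nat.card {c : (RG P).ConnectedComponent // ¬ ∃ s ∈ P.cyclesIn c, Odd s.card}

/-- The vertices visited by a cycle, recorded by its edge set. -/
def cycleVerts (s : Finset (Sym2 (Pos n))) : Set (Pos n) := {v | ∃ e ∈ s, v ∈ e}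

end TypeCPoset

section LieDefs

variable (L : Type*) [LieRing L] [LieAlgebra ℂ L]

/-- The kernel of the bilinear form `B_φ(x, y) = φ⁅x, y⁆`. -/
def coadjKernel (φ : Module.Dual ℂ L) : Submodule ℂ L where
  carrier := {x | ∀ y : L, φ ⁅x, y⁆ = 0}
  add_mem' := by
    intro a b ha hb y
    simp only [Set.mem_setOf_eq] at ha hb ⊢
    rw [add_lie, map_add, ha y, hb y, add_zero]
  zero_mem' := by
    intro y
    rw [zero_lie, map_zero]
  smul_mem' := by
    intro c x hx y
    simp only [Set.mem_setOf_eq] at hx ⊢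
    rw [smul_lie, map_smul, hx y, smul_zero]

/-- The index of a Lie algebra: `ind g = min_{φ ∈ g*} dim ker(B_φ)`. -/
noncomputable def lieIndex : ℕ :=
  sInf (Set.range fun φ : Module.Dual ℂ L => Module.finrank ℂ (coadjKernel L φ))

/-- `φ` is a contact form on `L`: `L` is odd-dimensional and the restriction of
`B_φ(x, y) = φ⁅x, y⁆` to `ker φ` is nondegenerate. -/
def IsContactForm (φ : Module.Dual ℂ L) : Prop :=
  Odd (Module.finrank ℂ L) ∧
    ∀ x : L, φ x = 0 → (∀ y : L, φ y = 0 → φ ⁅x, y⁆ = 0) → x = 0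

/-- `L` is a contact Lie algebra. -/
def IsContact : Prop := ∃ φ : Module.Dual ℂ L, IsContactForm L φ

end LieDefs

end LiePoset

/-!
Take an even cycle of `RG(P)` and let `X_t` be the spanning vector of `g_C(P)` attached to its
`t`-th edge. Since `P` has height one, the spanning vectors other than the `D_l` pairwise
commute, and `D_l` acts on `X_t` by `σ(l)` times the number of endpoints of the `t`-th edge equal
to `l`, for a sign `σ(l)` depending on `l` alone. If `φ (X_t) = 0` for some `t`, then `X_t` lies
in the radical of `B_φ` on `ker φ`. Otherwise `x = ∑ (-1)^t X_t / φ (X_t)` lies in `ker φ`, and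
`φ ⁅D_l, x⁆` is an alternating sum of incidences of `l` along a closed walk of even length, which
telescopes to zero; `x ≠ 0` because the `X_t`, attached to distinct edges, are linearly
independent.
-/

namespace LieAlgebra

variable {K L : Type*} [Field K] [LieRing L] [LieAlgebra K L]

lemma apply_lie_eq_zero_of_span_eq_top (φ : Module.Dual K L) {S : Set L}
    (hS : Submodule.span K S = ⊤) {x : L} (hx : ∀ y ∈ S, φ ⁅y, x⁆ = 0) (y : L) :
    φ ⁅x, y⁆ = 0 := by
  have hy : y ∈ Submodule.span K S := hS ▸ Submodule.mem_top
  rw [← lie_skew, map_neg, neg_eq_zero]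
  induction hy using Submodule.span_induction with
  | mem y hy => exact hx y hy
  | zero => simp
  | add y z _ _ hy hz => simp [add_lie, hy, hz]
  | smul c y _ hy => simp [smul_lie, hy]

theorem exists_ne_zero_apply_lie_eq_zero_of_alternating_weights (φ : Module.Dual K L)
    {S : Set L} (hS : Submodule.span K S = ⊤) {m : ℕ} (hm : Even m) (hm0 : m ≠ 0)
    {X : Fin m → L} (hX : LinearIndependent K X)
    (hweights : ∀ y ∈ S, ∃ c : Fin m → K,
      (∀ t, ⁅y, X t⁆ = c t • X t) ∧ ∑ t : Fin m, (-1) ^ (t : ℕ) * c t = 0) :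
    ∃ x, x ≠ 0 ∧ φ x = 0 ∧ ∀ y, φ ⁅x, y⁆ = 0 := by
  by_cases hker : ∃ t, φ (X t) = 0
  · obtain ⟨t, ht⟩ := hker
    refine ⟨X t, hX.ne_zero t, ht, apply_lie_eq_zero_of_span_eq_top φ hS fun y hy => ?_⟩
    obtain ⟨c, hc, -⟩ := hweights y hy
    rw [hc, map_smul, ht, smul_zero]
  push Not at hker
  set a : Fin m → K := fun t => (-1) ^ (t : ℕ) * (φ (X t))⁻¹
  have ha : ∀ t, a t * φ (X t) = (-1) ^ (t : ℕ) := fun t => by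
    simp only [a, mul_assoc, inv_mul_cancel₀ (hker t), mul_one]
  refine ⟨∑ t, a t • X t, fun h => ?_, ?_,
    apply_lie_eq_zero_of_span_eq_top φ hS fun y hy => ?_⟩
  · have := Fintype.linearIndependent_iff.mp hX a h ⟨0, Nat.pos_of_ne_zero hm0⟩
    simp [a, hker] at this
  · simp only [map_sum, map_smul, smul_eq_mul, ha]
    rw [Fin.sum_univ_eq_sum_range (fun t => (-1 : K) ^ t), neg_one_geom_sum, if_pos hm]
  · obtain ⟨c, hc, hsum⟩ := hweights y hy
    simp only [lie_sum, lie_smul, hc, map_sum, map_smul, smul_eq_mul]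
    rw [← hsum]
    refine Finset.sum_congr rfl fun t _ => ?_
    rw [← ha t]
    ring

end LieAlgebra

lemma Submodule.span_coe_preimage_eq_top {R M : Type*} [Semiring R] [AddCommMonoid M]
    [Module R M] {p : Submodule R M} {s : Set M} (h : p = Submodule.span R s) :
    Submodule.span R ((↑) ⁻¹' s : Set p) = ⊤ := by
  subst h
  exact Submodule.span_span_coe_preimage

lemma SimpleGraph.Walk.IsTrail.injective_edge_getVert {V : Type*} {G : SimpleGraph V}
    {u v : V} {p : G.Walk u v} (hp : p.IsTrail) :
    Function.Injective fun t : Fin p.length => s(p.getVert t, p.getVert (t + 1)) := by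
  intro i j h
  have := List.nodup_iff_injective_getElem.mp hp.edges_nodup
    (a₁ := ⟨i, by simp⟩) (a₂ := ⟨j, by simp⟩) (by simpa [SimpleGraph.Walk.getElem_edges] using h)
  exact Fin.ext (by simpa using this)

lemma sum_range_neg_one_pow_mul_incidence {R V : Type*} [CommRing R] [DecidableEq V] {m : ℕ}
    (hm : Even m) {w : ℕ → V} (hw : w m = w 0) (l : V) :
    ∑ t ∈ Finset.range m,
      (-1 : R) ^ t * ((if l = w t then 1 else 0) + (if l = w (t + 1) then 1 else 0)) = 0 := by
  have key := Finset.sum_range_sub' (fun t => (-1 : R) ^ t * if l = w t then 1 else 0) m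
  rw [hw, hm.neg_one_pow, pow_zero, sub_self] at key
  refine (Finset.sum_congr rfl fun t _ => ?_).trans key
  rw [pow_succ]
  ring

namespace LiePoset

attribute [local instance 100] LieRing.ofAssociativeRing

variable {n : ℕ}

lemma Pos.val_pos (i : Pos n) : 0 < i.val := by
  have := i.2
  simp only [Finset.mem_Icc] at this
  omega

@[simp] lemma Pos.toIdx_inj {i j : Pos n} : i.toIdx = j.toIdx ↔ i = j := by
  rw [Subtype.ext_iff, Subtype.ext_iff]
  rfl

@[simp] lemma Pos.toIdx_neg_inj {i j : Pos n} : i.toIdx.neg = j.toIdx.neg ↔ i = j := by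
  rw [Subtype.ext_iff, Subtype.ext_iff]
  exact neg_inj

@[simp] lemma Pos.toIdx_ne_toIdx_neg (i j : Pos n) : i.toIdx ≠ j.toIdx.neg := by
  have := i.val_pos
  have := j.val_pos
  simp only [Pos.toIdx, Idx.neg, ne_eq, Subtype.ext_iff]
  omega

@[simp] lemma Pos.toIdx_neg_ne_toIdx (i j : Pos n) : i.toIdx.neg ≠ j.toIdx :=
  (Pos.toIdx_ne_toIdx_neg j i).symm

namespace TypeCPoset

variable {P : TypeCPoset n}

lemma lt_neg_neg {i j : ℤ} (h : P.lt i j) (hij : i ≠ -j) : P.lt (-j) (-i) :=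
  ⟨(P.nsymm hij).mp h.1, fun hc => h.2 (by omega)⟩

lemma lt_neg_comm {a b : Pos n} (h : P.lt (-a.val) b.val) (hab : a ≠ b) :
    P.lt (-b.val) a.val := by
  have hab' : -a.val ≠ -b.val := fun hc => hab (Subtype.ext (neg_inj.mp hc))
  simpa using lt_neg_neg h hab'

lemma lt_neg_and_lt_neg {a b : Pos n} (h : P.lt (-a.val) b.val ∨ P.lt (-b.val) a.val)
    (hab : a ≠ b) : P.lt (-a.val) b.val ∧ P.lt (-b.val) a.val :=
  h.elim (fun h => ⟨h, lt_neg_comm h hab⟩) (fun h => ⟨lt_neg_comm h hab.symm, h⟩)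

/-- The spanning vectors of `g_C(P)` other than the `D_i`. -/
def IsRootVector (P : TypeCPoset n) (M : Mat n) : Prop :=
  (∃ i j : Pos n, P.lt (-j.val) (-i.val) ∧ M = Rdash i j)
  ∨ (∃ i j : Pos n, P.lt (-i.val) j.val ∧ P.lt (-j.val) i.val ∧ M = Rpm i j)
  ∨ (∃ i : Pos n, P.lt (-i.val) i.val ∧ M = Eloop i)

-- A nonzero product of two root vectors would come from a chain of length three in `P`.
lemma IsRootVector.mul_eq_zero (hP : P.HeightOne) {M N : Mat n} (hM : IsRootVector P M)
    (hN : IsRootVector P N) : M * N = 0 := by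
  obtain (⟨i, j, h1, rfl⟩ | ⟨i, j, h1a, h1b, rfl⟩ | ⟨i, h1, rfl⟩) := hM <;>
    obtain (⟨k, l, h2, rfl⟩ | ⟨k, l, h2a, h2b, rfl⟩ | ⟨k, h2, rfl⟩) := hN
  · by_cases hil : i = l
    · subst hil; exact (hP _ _ _ h1 h2).elim
    by_cases hjk : j = k
    · subst hjk; exact (hP _ _ _ h2 h1).elim
    simp [Rdash, sub_mul, mul_sub, hil, hjk]
  · by_cases hik : i = k
    · subst hik; exact (hP _ _ _ h1 h2a).elim
    by_cases hil : i = l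
    · subst hil; exact (hP _ _ _ h1 h2b).elim
    simp [Rdash, Rpm, sub_mul, mul_add, hik, hil]
  · by_cases hik : i = k
    · subst hik; exact (hP _ _ _ h1 h2).elim
    simp [Rdash, Eloop, sub_mul, hik]
  · by_cases hjk : j = k
    · subst hjk; exact (hP _ _ _ h2 h1b).elim
    by_cases hik : i = k
    · subst hik; exact (hP _ _ _ h2 h1a).elim
    simp [Rdash, Rpm, add_mul, mul_sub, hik, hjk]
  · simp [Rpm, add_mul, mul_add]
  · simp [Rpm, Eloop, add_mul]
  · by_cases hik : i = k
    · subst hik; exact (hP _ _ _ h2 h1).elim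
    simp [Eloop, Rdash, mul_sub, hik]
  · simp [Eloop, Rpm, mul_add]
  · simp [Eloop]

lemma IsRootVector.lie_eq_zero (hP : P.HeightOne) {M N : Mat n} (hM : IsRootVector P M)
    (hN : IsRootVector P N) : ⁅M, N⁆ = 0 := by
  rw [Ring.lie_def, hM.mul_eq_zero hP hN, hN.mul_eq_zero hP hM, sub_zero]

lemma lie_Dmat_Rpm {a b : Pos n} (hab : a ≠ b) (l : Pos n) :
    ⁅Dmat l, Rpm a b⁆ =
      ((if l = a then 1 else 0) + (if l = b then 1 else 0) : ℂ) • Rpm a b := by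
  rw [Ring.lie_def]
  by_cases hla : l = a <;> by_cases hlb : l = b
  · exact absurd (hla.symm.trans hlb) hab
  · subst hla
    simp [Dmat, Rpm, sub_mul, mul_sub, add_mul, mul_add, hlb, Ne.symm hlb]
  · subst hlb
    simp [Dmat, Rpm, sub_mul, mul_sub, add_mul, mul_add, hla, Ne.symm hla]
    abel
  · simp [Dmat, Rpm, sub_mul, mul_sub, add_mul, mul_add, hla, hlb, Ne.symm hla, Ne.symm hlb]

lemma lie_Dmat_Rdash {a b : Pos n} (hab : a ≠ b) (l : Pos n) :
    ⁅Dmat l, Rdash a b⁆ =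
      ((if l = a then -1 else 0) + (if l = b then 1 else 0) : ℂ) • Rdash a b := by
  rw [Ring.lie_def]
  by_cases hla : l = a <;> by_cases hlb : l = b
  · exact absurd (hla.symm.trans hlb) hab
  · subst hla
    simp [Dmat, Rdash, sub_mul, mul_sub, hlb, Ne.symm hlb, smul_sub]
    abel
  · subst hlb
    simp [Dmat, Rdash, sub_mul, mul_sub, hla, Ne.symm hla, smul_sub]
  · simp [Dmat, Rdash, sub_mul, mul_sub, hla, hlb, Ne.symm hla, Ne.symm hlb]

open scoped Classical in
noncomputable def vertexSign (P : TypeCPoset n) (a : Pos n) : ℂ :=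
  if ∃ c : Pos n, P.lt (-c.val) (-a.val) then -1 else 1

lemma vertexSign_eq_neg_one {a c : Pos n} (h : P.lt (-c.val) (-a.val)) :
    vertexSign P a = -1 :=
  if_pos ⟨c, h⟩

lemma vertexSign_eq_one (hP : P.HeightOne) {a : Pos n} {m : ℤ} (h : P.lt (-a.val) m) :
    vertexSign P a = 1 :=
  if_neg fun ⟨_, hc⟩ => hP _ _ _ hc h

open scoped Classical in
noncomputable def edgeGen (P : TypeCPoset n) (a b : Pos n) : Mat n :=
  if P.lt (-a.val) b.val ∨ P.lt (-b.val) a.val then Rpm a b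
  else if P.lt (-b.val) (-a.val) then Rdash a b
  else Rdash b a

lemma isRootVector_edgeGen {a b : Pos n} (h : (RG P).Adj a b) :
    IsRootVector P (edgeGen P a b) := by
  obtain ⟨hab, hrel⟩ := h
  unfold edgeGen
  split_ifs with hnd hd
  · obtain ⟨h1, h2⟩ := lt_neg_and_lt_neg hnd hab
    exact Or.inr (Or.inl ⟨a, b, h1, h2, rfl⟩)
  · exact Or.inl ⟨a, b, hd, rfl⟩
  · exact Or.inl ⟨b, a, by tauto, rfl⟩

-- In a height-one poset `-l` cannot be both the top and the bottom of a relation, so the sign of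
-- the weight at `l` of an edge vector depends on `l` alone.
lemma lie_Dmat_edgeGen (hP : P.HeightOne) {a b : Pos n} (h : (RG P).Adj a b) (l : Pos n) :
    ⁅Dmat l, edgeGen P a b⁆ =
      (vertexSign P l * ((if l = a then 1 else 0) + (if l = b then 1 else 0))) •
        edgeGen P a b := by
  obtain ⟨hab, hrel⟩ := h
  by_cases hnd : P.lt (-a.val) b.val ∨ P.lt (-b.val) a.val
  · obtain ⟨h1, h2⟩ := lt_neg_and_lt_neg hnd hab
    have ha := vertexSign_eq_one hP h1
    have hb := vertexSign_eq_one hP h2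
    rw [edgeGen, if_pos hnd, lie_Dmat_Rpm hab]
    congr 1
    split_ifs <;> simp_all
  by_cases hd : P.lt (-b.val) (-a.val)
  · have ha := vertexSign_eq_neg_one hd
    have hb := vertexSign_eq_one hP hd
    rw [edgeGen, if_neg hnd, if_pos hd, lie_Dmat_Rdash hab]
    congr 1
    split_ifs <;> simp_all
  · have hd' : P.lt (-a.val) (-b.val) := by tauto
    have ha := vertexSign_eq_one hP hd'
    have hb := vertexSign_eq_neg_one hd'
    rw [edgeGen, if_neg hnd, if_neg hd, lie_Dmat_Rdash hab.symm]
    congr 1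
    split_ifs <;> simp_all

lemma exists_edgeGen_apply_ne_zero (P : TypeCPoset n) {a b : Pos n} (hab : a ≠ b) :
    ∃ q r : Idx n, edgeGen P a b q r ≠ 0 := by
  unfold edgeGen
  split_ifs
  · exact ⟨a.toIdx.neg, b.toIdx, by simp [Rpm, Matrix.add_apply, hab, Ne.symm hab]⟩
  · exact ⟨a.toIdx, b.toIdx, by simp [Rdash, Matrix.sub_apply]⟩
  · exact ⟨b.toIdx, a.toIdx, by simp [Rdash, Matrix.sub_apply]⟩

lemma abs_of_edgeGen_apply_ne_zero {a b : Pos n} {q r : Idx n} (h : edgeGen P a b q r ≠ 0) :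
    (|q.val| = a.val ∧ |r.val| = b.val) ∨ (|q.val| = b.val ∧ |r.val| = a.val) := by
  have ha := a.val_pos
  have hb := b.val_pos
  rw [abs_eq_max_neg, abs_eq_max_neg]
  unfold edgeGen Rpm Rdash at h
  split_ifs at h <;>
  · simp only [Matrix.add_apply, Matrix.sub_apply, Matrix.single_apply, Pos.toIdx, Idx.neg,
      Subtype.ext_iff] at h
    split_ifs at h <;> first | omega | simp at h

lemma sym2_eq_of_edgeGen_apply_ne_zero {a b c d : Pos n} {q r : Idx n}
    (h₁ : edgeGen P a b q r ≠ 0) (h₂ : edgeGen P c d q r ≠ 0) : s(a, b) = s(c, d) := by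
  simp only [Sym2.eq_iff, Subtype.ext_iff]
  rcases abs_of_edgeGen_apply_ne_zero h₁ with h₁ | h₁ <;>
    rcases abs_of_edgeGen_apply_ne_zero h₂ with h₂ | h₂ <;> omega

lemma linearIndependent_edgeGen {ι : Type*} {a b : ι → Pos n} (hab : ∀ i, a i ≠ b i)
    (hinj : Function.Injective fun i => s(a i, b i)) :
    LinearIndependent ℂ fun i => edgeGen P (a i) (b i) := by
  rw [linearIndependent_iff']
  intro s c hsum i hi
  obtain ⟨q, r, hqr⟩ := exists_edgeGen_apply_ne_zero P (hab i)
  have hentry := congrFun (congrFun hsum q) r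
  rw [Matrix.sum_apply, Finset.sum_eq_single_of_mem i hi] at hentry
  · simpa [hqr] using hentry
  · intro j _ hji
    by_contra hne
    rw [Matrix.smul_apply, smul_eq_mul] at hne
    exact hji (hinj (sym2_eq_of_edgeGen_apply_ne_zero (right_ne_zero_of_mul hne) hqr))

lemma exists_isCycle_even_length (h : ∃ s ∈ P.cycles, Even s.card) :
    ∃ (v : Pos n) (p : (RG P).Walk v v), p.IsCycle ∧ Even p.length := by
  obtain ⟨s, ⟨v, -, rfl⟩ | ⟨v, p, hp, rfl⟩, hs⟩ := h
  · simp at hs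
  · refine ⟨v, p, hp, ?_⟩
    rwa [List.toFinset_card_of_nodup hp.edges_nodup, SimpleGraph.Walk.length_edges] at hs

variable {g : LieSubalgebra ℂ (Mat n)}

lemma edgeGen_mem (hg : g.toSubmodule = Submodule.span ℂ (gcSet P)) {a b : Pos n}
    (h : (RG P).Adj a b) : edgeGen P a b ∈ g := by
  change _ ∈ g.toSubmodule
  rw [hg]
  exact Submodule.subset_span (Or.inr (isRootVector_edgeGen h))

noncomputable def walkEdgeGen (hg : g.toSubmodule = Submodule.span ℂ (gcSet P))
    {u v : Pos n} (p : (RG P).Walk u v) (t : Fin p.length) : g :=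
  ⟨edgeGen P (p.getVert t) (p.getVert (t + 1)), edgeGen_mem hg (p.adj_getVert_succ t.2)⟩

variable (hg : g.toSubmodule = Submodule.span ℂ (gcSet P))

lemma linearIndependent_walkEdgeGen {u v : Pos n} {p : (RG P).Walk u v} (hp : p.IsTrail) :
    LinearIndependent ℂ (walkEdgeGen hg p) :=
  LinearIndependent.of_comp g.toSubmodule.subtype <|
    linearIndependent_edgeGen (fun t => (p.adj_getVert_succ t.2).ne) hp.injective_edge_getVert

lemma exists_lie_walkEdgeGen_eq_smul (hP : P.HeightOne) {v : Pos n} {p : (RG P).Walk v v}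
    (hp : Even p.length) (y : g) (hy : (y : Mat n) ∈ gcSet P) :
    ∃ c : Fin p.length → ℂ, (∀ t, ⁅y, walkEdgeGen hg p t⁆ = c t • walkEdgeGen hg p t) ∧
      ∑ t : Fin p.length, (-1) ^ (t : ℕ) * c t = 0 := by
  rcases hy with ⟨l, hl⟩ | hroot
  · refine ⟨fun t => vertexSign P l *
      ((if l = p.getVert t then 1 else 0) + (if l = p.getVert (t + 1) then 1 else 0)), ?_, ?_⟩
    · intro t
      apply Subtype.ext
      rw [LieSubalgebra.coe_bracket, hl]
      exact lie_Dmat_edgeGen hP (p.adj_getVert_succ t.2) l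
    · simp_rw [mul_left_comm _ (vertexSign P l), ← Finset.mul_sum]
      exact mul_eq_zero_of_right _ ((Fin.sum_univ_eq_sum_range _ _).trans
        (sum_range_neg_one_pow_mul_incidence hp (by simp) l))
  · refine ⟨0, fun t => Subtype.ext ?_, by simp⟩
    rw [LieSubalgebra.coe_bracket, Pi.zero_apply, zero_smul]
    exact IsRootVector.lie_eq_zero hP hroot (isRootVector_edgeGen (p.adj_getVert_succ t.2))

end TypeCPoset

theorem not_contact_of_even_cycle_general (n : ℕ) (P : TypeCPoset n)
    (hP : P.HeightOne)
    (heven : ∃ s ∈ P.cycles, Even s.card)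
    (g : LieSubalgebra ℂ (Mat n))
    (hg : g.toSubmodule = Submodule.span ℂ (TypeCPoset.gcSet P)) :
    ¬ IsContact ↥g := by
  rintro ⟨φ, -, hφ⟩
  obtain ⟨v, p, hp, hlen⟩ := TypeCPoset.exists_isCycle_even_length heven
  obtain ⟨x, hx0, hφx, hx⟩ := LieAlgebra.exists_ne_zero_apply_lie_eq_zero_of_alternating_weights
    φ (Submodule.span_coe_preimage_eq_top hg) hlen (by have := hp.three_le_length; omega)
    (TypeCPoset.linearIndependent_walkEdgeGen hg hp.isTrail)
    (TypeCPoset.exists_lie_walkEdgeGen_eq_smul hg hP hlen)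
  exact hx0 (hφ x hφx fun y _ => hx y)

/-- **Proposition.** Let `P` be a connected type-C poset of height one.  If `RG(P)`
contains an even cycle, then `g_C(P)` is not contact. -/
theorem not_contact_of_even_cycle (n : ℕ) (P : TypeCPoset n)
    (hP : P.HeightOne) (hconn : (TypeCPoset.RG P).Connected)
    (heven : ∃ s ∈ P.cycles, Even s.card)
    (g : LieSubalgebra ℂ (Mat n))
    (hg : g.toSubmodule = Submodule.span ℂ (TypeCPoset.gcSet P)) :
    ¬ IsContact ↥g :=
  not_contact_of_even_cycle_general n P hP heven g hg

end LiePoset
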